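/- Let $P_A$ be uniformly distributed on $[P_{\min}, P_{\max}]$ with $0 \le P_{\min} < P_{\max}$, let $T$ be an independent exponential random variable with mean $\lambda > 0$, and let $t_A > 0$, $\sigma^2 \ge 0$. Define the detection error probability $\xi(\Gamma) = \Pr(P_A t_A + \sigma^2 > \Gamma) + \Pr(P_A t_A + T + \sigma^2 < \Gamma)$ for $\Gamma \in \mathbb{R}$. Then $\xi$ attains its minimum over all $\Gamma \in \mathbb{R}$ at $\Gamma^* = \sigma^2 + P_{\max} t_A$, i.e., $\xi(\Gamma^*) \le \xi(\Gamma)$ for all $\Gamma$, and the minimum value equals $\xi(\Gamma^*) = 1 - \frac{\lambda}{(P_{\max}-P_{\min}) t_A}\left(1 - e^{-(P_{\max}-P_{\min}) t_A / \lambda}\right)$. -/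

import Mathlib

/-!
Conditioning on `P_A = p`, Willie errs with probability `h (Γ - σ² - p t_A)`, where `h y = 1`
for `y < 0` (certain false alarm) and `h y = 1 - e^{-y/λ}` for `y ≥ 0` (miss). Averaging over the
uniform `P_A` and substituting `y = Γ - σ² - p t_A` turns `ξ(Γ)` into the mean of `h` over a window
of length `Δ = (P_max - P_min) t_A` starting at `Γ - σ² - P_max t_A`. Since `h ≤ 1`, `h = 1` left
of `0` and `h` is increasing on `[0, ∞)`, the window `[0, Δ]` (i.e. `Γ = σ² + P_max t_A`) is
optimal, and `∫₀^Δ h = Δ - λ (1 - e^{-Δ/λ})`.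
-/

open MeasureTheory Set intervalIntegral Real

/-- `conditionalError l (Γ - σ² - p t_A)` is the detection error probability given `P_A = p`,
when `T` is exponential with mean `l`. -/
noncomputable def conditionalError (l y : ℝ) : ℝ := if y < 0 then 1 else 1 - exp (-y / l)

namespace conditionalError

variable {l : ℝ}

lemma of_neg {y : ℝ} (hy : y < 0) : conditionalError l y = 1 := if_pos hy

lemma of_nonneg {y : ℝ} (hy : 0 ≤ y) : conditionalError l y = 1 - exp (-y / l) :=
  if_neg hy.not_gt

lemma le_one (y : ℝ) : conditionalError l y ≤ 1 := by
  unfold conditionalError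
  split_ifs <;> linarith [exp_pos (-y / l)]

lemma nonneg (hl : 0 ≤ l) (y : ℝ) : 0 ≤ conditionalError l y := by
  rcases lt_or_ge y 0 with hy | hy
  · rw [of_neg hy]; exact zero_le_one
  · rw [of_nonneg hy, sub_nonneg, exp_le_one_iff]
    exact div_nonpos_of_nonpos_of_nonneg (neg_nonpos.2 hy) hl

lemma monotoneOn (hl : 0 ≤ l) : MonotoneOn (conditionalError l) (Ici 0) := by
  intro x hx y hy hxy
  rw [of_nonneg hx, of_nonneg hy, sub_le_sub_iff_left, exp_le_exp]
  exact div_le_div_of_nonneg_right (neg_le_neg hxy) hl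

@[fun_prop]
lemma measurable : Measurable (conditionalError l) :=
  Measurable.ite measurableSet_Iio measurable_const (by fun_prop)

lemma intervalIntegrable (hl : 0 ≤ l) (a b : ℝ) :
    IntervalIntegrable (conditionalError l) volume a b :=
  (intervalIntegrable_const (c := (1 : ℝ))).mono_fun' measurable.aestronglyMeasurable
    (ae_of_all _ fun y => by
      simpa [abs_of_nonneg (nonneg hl y)] using le_one y)

end conditionalError

lemma integral_conditionalError_zero_to {l Δ : ℝ} (hl : 0 < l) (hΔ : 0 ≤ Δ) :
    ∫ y in 0..Δ, conditionalError l y = Δ - l * (1 - exp (-Δ / l)) := by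
  rw [integral_congr fun y hy =>
    conditionalError.of_nonneg (l := l) (by rw [uIcc_of_le hΔ] at hy; exact hy.1)]
  have hexp := integral_comp_mul_right exp (c := -l⁻¹) (by simp [hl.ne']) (a := 0) (b := Δ)
  simp only [integral_exp, zero_mul, exp_zero, smul_eq_mul, inv_neg, inv_inv] at hexp
  rw [integral_sub intervalIntegrable_const (Continuous.intervalIntegrable (by fun_prop) _ _),
    intervalIntegral.integral_const]
  simp only [div_eq_mul_inv, neg_mul_comm, hexp, sub_zero, smul_eq_mul, mul_one]
  ring

lemma integral_conditionalError_zero_to_le {l Δ : ℝ} (hl : 0 ≤ l) (hΔ : 0 ≤ Δ) (c : ℝ) :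
    ∫ y in 0..Δ, conditionalError l y ≤ ∫ y in c..c + Δ, conditionalError l y := by
  have hint := conditionalError.intervalIntegrable (l := l) hl
  rcases le_or_gt 0 c with hc | hc
  · have hshift := integral_comp_add_right (conditionalError l) c (a := 0) (b := Δ)
    rw [zero_add, add_comm Δ c] at hshift
    rw [← hshift]
    refine integral_mono_on hΔ (hint 0 Δ) (by simpa using (hint c (c + Δ)).comp_add_right c)
      fun y hy => ?_
    exact conditionalError.monotoneOn hl hy.1 (add_nonneg hy.1 hc) (le_add_of_nonneg_right hc)
  · -- The two windows differ by `[c, 0]`, where `h = 1`, and `[c + Δ, Δ]`, where `h ≤ 1`.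
    have hleft : ∫ y in c..0, conditionalError l y = -c := by
      rw [integral_congr_ae (g := fun _ => 1) ((Measure.ae_ne volume 0).mono fun y hy hyI =>
        conditionalError.of_neg (lt_of_le_of_ne (uIoc_of_le hc.le ▸ hyI).2 hy))]
      simp
    have hright : ∫ y in c + Δ..Δ, conditionalError l y ≤ -c := by
      have h := integral_mono_on (by linarith) (hint (c + Δ) Δ) intervalIntegrable_const
        fun y _ => conditionalError.le_one (l := l) y
      simpa using h
    have hdiff := integral_interval_sub_interval_comm (hint c (c + Δ)) (hint 0 Δ) (hint c 0)
    linarith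

section

open ProbabilityTheory

lemma expMeasure_inv_eq_withDensity (l : ℝ) :
    expMeasure l⁻¹ = volume.withDensity
      (fun t => ENNReal.ofReal (if 0 ≤ t then (1 / l) * exp (-t / l) else 0)) := by
  change volume.withDensity (exponentialPDF l⁻¹) = _
  congr 1
  funext t
  rw [exponentialPDF_eq, one_div, neg_div, div_eq_inv_mul]

lemma expMeasure_Iio {r : ℝ} (hr : 0 < r) (a : ℝ) :
    expMeasure r (Iio a) = ENNReal.ofReal (if 0 ≤ a then 1 - exp (-(r * a)) else 0) := by
  have := isProbabilityMeasure_expMeasure hr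
  rw [measure_congr (Iio_ae_eq_Iic' (μ := expMeasure r)
      (withDensity_absolutelyContinuous _ _ Real.volume_singleton)),
    ← ofReal_cdf, cdf_expMeasure_eq hr]

lemma conditionalError.ofReal_eq {l : ℝ} (hl : 0 < l) (y : ℝ) :
    ENNReal.ofReal (conditionalError l y) = (Iio 0).indicator 1 y + expMeasure l⁻¹ (Iio y) := by
  rw [expMeasure_Iio (inv_pos.2 hl)]
  rcases lt_or_ge y 0 with hy | hy
  · simp [conditionalError.of_neg hy, hy, hy.not_ge]
  · rw [conditionalError.of_nonneg hy, if_pos hy,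
      indicator_of_notMem (show y ∉ Iio 0 from not_lt.2 hy), zero_add, neg_div, div_eq_inv_mul]

lemma measureReal_lt_add_measureReal_add_lt {Ω : Type*} [MeasurableSpace Ω] {μ : Measure Ω}
    [IsProbabilityMeasure μ] {X T : Ω → ℝ} {l : ℝ} (hl : 0 < l)
    (hX : Measurable X) (hT : Measurable T) (hTlaw : μ.map T = expMeasure l⁻¹)
    (hindep : IndepFun X T μ) (Γ : ℝ) :
    μ.real {ω | Γ < X ω} + μ.real {ω | X ω + T ω < Γ} =
      ∫ x, conditionalError l (Γ - x) ∂μ.map X := by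
  have hfa : μ {ω | Γ < X ω} = ∫⁻ x, (Iio 0).indicator 1 (Γ - x) ∂μ.map X :=
    calc μ {ω | Γ < X ω} = μ.map X (Ioi Γ) := (Measure.map_apply hX measurableSet_Ioi).symm
      _ = ∫⁻ x, (Ioi Γ).indicator 1 x ∂μ.map X := (lintegral_indicator_one measurableSet_Ioi).symm
      _ = _ := lintegral_congr fun x => by simp [indicator_apply]
  have hmd : μ {ω | X ω + T ω < Γ} = ∫⁻ x, expMeasure l⁻¹ (Iio (Γ - x)) ∂μ.map X := by
    have hS : MeasurableSet {q : ℝ × ℝ | q.1 + q.2 < Γ} :=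
      measurableSet_lt (by fun_prop) measurable_const
    have hfib : ∀ x : ℝ, Prod.mk x ⁻¹' {q : ℝ × ℝ | q.1 + q.2 < Γ} = Iio (Γ - x) := fun x => by
      ext t
      simp [lt_sub_iff_add_lt']
    calc μ {ω | X ω + T ω < Γ} = μ.map (fun ω => (X ω, T ω)) {q | q.1 + q.2 < Γ} :=
          (Measure.map_apply (hX.prodMk hT) hS).symm
      _ = ((μ.map X).prod (μ.map T)) {q | q.1 + q.2 < Γ} := by
          rw [(indepFun_iff_map_prod_eq_prod_map_map hX.aemeasurable hT.aemeasurable).1 hindep]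
      _ = _ := by rw [Measure.prod_apply hS]; simp_rw [hfib, hTlaw]
  have hsum : μ {ω | Γ < X ω} + μ {ω | X ω + T ω < Γ} =
      ∫⁻ x, ENNReal.ofReal (conditionalError l (Γ - x)) ∂μ.map X := by
    rw [hfa, hmd, ← lintegral_add_left (by measurability)]
    simp_rw [conditionalError.ofReal_eq hl]
  rw [integral_eq_lintegral_of_nonneg_ae
      (ae_of_all _ fun x => conditionalError.nonneg hl.le _)
      (by fun_prop : Measurable fun x => conditionalError l (Γ - x)).aestronglyMeasurable,
    ← hsum, measureReal_def, measureReal_def, ENNReal.toReal_add (measure_ne_top _ _)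
      (measure_ne_top _ _)]

lemma integral_smul_restrict_Icc {a b : ℝ} (hab : a ≤ b) (f : ℝ → ℝ) :
    ∫ x, f x ∂((ENNReal.ofReal (b - a))⁻¹ • volume.restrict (Icc a b)) =
      (b - a)⁻¹ * ∫ x in a..b, f x := by
  rw [MeasureTheory.integral_smul_measure, integral_Icc_eq_integral_Ioc, ← integral_of_le hab,
    smul_eq_mul, ENNReal.toReal_inv, ENNReal.toReal_ofReal (sub_nonneg.2 hab)]

lemma detectionError_eq_integral_window {Ω : Type*} [MeasurableSpace Ω] {μ : Measure Ω}
    [IsProbabilityMeasure μ] {Pmin Pmax l tA σ2 : ℝ} (hPP : Pmin ≤ Pmax) (hl : 0 < l)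
    (htA : 0 < tA) {PA T : Ω → ℝ} (hPAmeas : Measurable PA) (hTmeas : Measurable T)
    (hPAlaw : μ.map PA = (ENNReal.ofReal (Pmax - Pmin))⁻¹ • volume.restrict (Icc Pmin Pmax))
    (hTlaw : μ.map T = expMeasure l⁻¹) (hindep : IndepFun PA T μ) (Γ : ℝ) :
    (μ {ω | PA ω * tA + σ2 > Γ}).toReal + (μ {ω | PA ω * tA + T ω + σ2 < Γ}).toReal =
      ((Pmax - Pmin) * tA)⁻¹ * ∫ y in Γ - σ2 - Pmax * tA..Γ - σ2 - Pmax * tA + (Pmax - Pmin) * tA,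
        conditionalError l y := by
  set g : ℝ → ℝ := fun p => p * tA + σ2 with hg
  have hgmeas : Measurable g := by fun_prop
  have hmiss : {ω | PA ω * tA + T ω + σ2 < Γ} = {ω | g (PA ω) + T ω < Γ} := by
    ext ω
    simp only [hg, mem_ofPred_eq, add_right_comm]
  have hfa : {ω | PA ω * tA + σ2 > Γ} = {ω | Γ < g (PA ω)} := rfl
  rw [hfa, hmiss, ← measureReal_def, ← measureReal_def]
  refine (measureReal_lt_add_measureReal_add_lt hl (hgmeas.comp hPAmeas) hTmeas hTlaw
    (hindep.comp hgmeas measurable_id) Γ).trans ?_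
  rw [← Measure.map_map hgmeas hPAmeas, integral_map hgmeas.aemeasurable
      (by fun_prop : Measurable fun x => conditionalError l (Γ - x)).aestronglyMeasurable,
    hPAlaw, integral_smul_restrict_Icc hPP]
  have harg : ∀ p, Γ - g p = (Γ - σ2) - tA * p := fun p => by rw [hg]; ring
  simp_rw [harg]
  rw [integral_comp_sub_mul _ htA.ne', smul_eq_mul, mul_inv,
    show Γ - σ2 - tA * Pmin = Γ - σ2 - Pmax * tA + (Pmax - Pmin) * tA by ring,
    show Γ - σ2 - tA * Pmax = Γ - σ2 - Pmax * tA by ring]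
  ring

end

theorem stmt_7_general
    {Ω : Type*} [MeasurableSpace Ω] (ℙ : Measure Ω) [IsProbabilityMeasure ℙ]
    (Pmin Pmax l tA σ2 : ℝ)
    (hPP : Pmin < Pmax) (hl : 0 < l) (htA : 0 < tA)
    (PA T : Ω → ℝ) (hPAmeas : Measurable PA) (hTmeas : Measurable T)
    (hPAlaw : Measure.map PA ℙ =
      (ENNReal.ofReal (Pmax - Pmin))⁻¹ • volume.restrict (Set.Icc Pmin Pmax))
    (hTlaw : Measure.map T ℙ =
      volume.withDensity
        (fun t => ENNReal.ofReal (if 0 ≤ t then (1 / l) * Real.exp (-t / l) else 0)))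
    (hindep : ProbabilityTheory.IndepFun PA T ℙ)
    (ξ : ℝ → ℝ)
    (hξ : ∀ Γ : ℝ, ξ Γ = (ℙ {ω | PA ω * tA + σ2 > Γ}).toReal
        + (ℙ {ω | PA ω * tA + T ω + σ2 < Γ}).toReal) :
    (∀ Γ : ℝ, ξ (σ2 + Pmax * tA) ≤ ξ Γ) ∧
    ξ (σ2 + Pmax * tA)
      = 1 - l / ((Pmax - Pmin) * tA) * (1 - Real.exp (-(Pmax - Pmin) * tA / l)) := by
  have hΔ : 0 < (Pmax - Pmin) * tA := mul_pos (sub_pos.2 hPP) htA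
  have hwindow := fun Γ => (hξ Γ).trans <| detectionError_eq_integral_window hPP.le hl htA
    hPAmeas hTmeas hPAlaw (hTlaw.trans (expMeasure_inv_eq_withDensity l).symm) hindep Γ
  have hopt : ξ (σ2 + Pmax * tA) =
      ((Pmax - Pmin) * tA)⁻¹ * ∫ y in 0..(Pmax - Pmin) * tA, conditionalError l y := by
    rw [hwindow, add_sub_cancel_left, sub_self, zero_add]
  refine ⟨fun Γ => ?_, ?_⟩
  · rw [hopt, hwindow]
    exact mul_le_mul_of_nonneg_left
      (integral_conditionalError_zero_to_le hl.le hΔ.le _) (inv_nonneg.2 hΔ.le)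
  · rw [hopt, integral_conditionalError_zero_to hl hΔ.le, neg_mul, mul_sub,
      inv_mul_cancel₀ hΔ.ne']
    ring

/-- Statistical-WCSI optimal detection threshold: the detection error
probability `ξ(Γ) = Pr(P_A t_A + σ² > Γ) + Pr(P_A t_A + T + σ² < Γ)` attains
its minimum over all thresholds at `Γ* = σ² + Pmax t_A`, with minimum value
`1 - (λ/((Pmax-Pmin) t_A)) (1 - e^{-(Pmax-Pmin) t_A/λ})`. -/
theorem stmt_7
    {Ω : Type*} [MeasurableSpace Ω] (ℙ : Measure Ω) [IsProbabilityMeasure ℙ]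
    (Pmin Pmax l tA σ2 : ℝ)
    (hPmin : 0 ≤ Pmin) (hPP : Pmin < Pmax) (hl : 0 < l) (htA : 0 < tA) (hσ2 : 0 ≤ σ2)
    (PA T : Ω → ℝ) (hPAmeas : Measurable PA) (hTmeas : Measurable T)
    (hPAlaw : Measure.map PA ℙ =
      (ENNReal.ofReal (Pmax - Pmin))⁻¹ • volume.restrict (Set.Icc Pmin Pmax))
    (hTlaw : Measure.map T ℙ =
      volume.withDensity
        (fun t => ENNReal.ofReal (if 0 ≤ t then (1 / l) * Real.exp (-t / l) else 0)))
    (hindep : ProbabilityTheory.IndepFun PA T ℙ)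
    (ξ : ℝ → ℝ)
    (hξ : ∀ Γ : ℝ, ξ Γ = (ℙ {ω | PA ω * tA + σ2 > Γ}).toReal
        + (ℙ {ω | PA ω * tA + T ω + σ2 < Γ}).toReal) :
    (∀ Γ : ℝ, ξ (σ2 + Pmax * tA) ≤ ξ Γ) ∧
    ξ (σ2 + Pmax * tA)
      = 1 - l / ((Pmax - Pmin) * tA) * (1 - Real.exp (-(Pmax - Pmin) * tA / l)) :=
  stmt_7_general ℙ Pmin Pmax l tA σ2 hPP hl htA PA T hPAmeas hTmeas hPAlaw hTlaw hindep ξ hξ
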